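/- Suppose f : ℝⁿ → ℝ ∪ {+∞} is a proper lower semicontinuous function that is quadratically minorised and prox-regular at x̄ for z̄ ∈ ∂f(x̄) with respect to ε and r, and that z̄ ∈ rel-int ∂f(x̄). Then for every β ≥ 0 there exist ε′ > 0 (independent of β) and ε_β > 0 (depending on β) such that f(x̄+u+v) ≥ f(x̄) + ⟨z̄, u+v⟩ + (β/2)‖v‖² − (r/2)‖u‖² whenever v ∈ B_{ε_β}(0) ∩ V and u ∈ B_{ε′}(0) ∩ U. Moreover U² := b¹(∂̲²f(x̄,z̄)) ⊆ U = {h : −δ*_{∂f(x̄)}(−h) = δ*_{∂f(x̄)}(h) = ⟨z̄, h⟩}. -/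

import Mathlib

open Filter Topology Metric Set
open scoped RealInnerProductSpace

noncomputable section

namespace Paper

attribute [local instance] Classical.propDecidable

/-- Ambient Euclidean space `ℝⁿ`. -/
abbrev E (n : ℕ) := EuclideanSpace ℝ (Fin n)

variable {n : ℕ}

/-- A proper extended-real-valued function: never `-∞` and finite somewhere. -/
def ProperFn (f : E n → EReal) : Prop :=
  (∀ x, f x ≠ ⊥) ∧ ∃ x, f x ≠ ⊤

/-- The proximal subdifferential `∂_p f(x)`. -/
def proxSubdiff (f : E n → EReal) (x : E n) : Set (E n) :=
  {z | ∃ r : ℝ, 0 ≤ r ∧ ∃ δ : ℝ, 0 < δ ∧ ∀ x' : E n, ‖x' - x‖ < δ →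
      f x + ((⟪z, x' - x⟫ - r / 2 * ‖x' - x‖ ^ 2 : ℝ) : EReal) ≤ f x'}

/-- The limiting (Mordukhovich) subdifferential `∂ f(x)`. -/
def limSubdiff (f : E n → EReal) (x : E n) : Set (E n) :=
  {z | ∃ xk zk : ℕ → E n,
      (∀ k, zk k ∈ proxSubdiff f (xk k)) ∧
      Tendsto xk atTop (𝓝 x) ∧
      Tendsto (fun k => f (xk k)) atTop (𝓝 (f x)) ∧
      Tendsto zk atTop (𝓝 z)}

/-- The singular limiting subdifferential `∂^∞ f(x)`. -/
def singSubdiff (f : E n → EReal) (x : E n) : Set (E n) :=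
  {z | ∃ (xk zk : ℕ → E n) (lk : ℕ → ℝ),
      (∀ k, zk k ∈ proxSubdiff f (xk k)) ∧ (∀ k, 0 < lk k) ∧
      Tendsto xk atTop (𝓝 x) ∧
      Tendsto (fun k => f (xk k)) atTop (𝓝 (f x)) ∧
      Tendsto lk atTop (𝓝 0) ∧
      Tendsto (fun k => lk k • zk k) atTop (𝓝 z)}

/-- `f` is quadratically minorised (prox-bounded). -/
def QuadMinorized (f : E n → EReal) (xb : E n) : Prop :=
  ∃ α R : ℝ, 0 < R ∧ ∀ x, ((α - R / 2 * ‖x - xb‖ ^ 2 : ℝ) : EReal) ≤ f x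

/-- `f` is prox-regular at `xb` for `zb` with respect to `ε` and `r`. -/
def ProxRegularAt (f : E n → EReal) (xb zb : E n) (ε r : ℝ) : Prop :=
  0 < ε ∧ 0 ≤ r ∧ zb ∈ limSubdiff f xb ∧
  ∀ x z : E n, z ∈ limSubdiff f x → ‖x - xb‖ ≤ ε → ‖z - zb‖ ≤ ε →
    f x ≤ f xb + (ε : EReal) → f xb ≤ f x + (ε : EReal) →
    ∀ x' : E n, ‖x' - xb‖ ≤ ε →
      f x + ((⟪z, x' - x⟫ - r / 2 * ‖x' - x‖ ^ 2 : ℝ) : EReal) ≤ f x'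

/-- `f` is subdifferentially continuous at `xb` for `zb`. -/
def SubdiffContinuousAt (f : E n → EReal) (xb zb : E n) : Prop :=
  ∀ δ : ℝ, 0 < δ → ∃ ε : ℝ, 0 < ε ∧ ∀ x z : E n, z ∈ limSubdiff f x →
    ‖x - xb‖ ≤ ε → ‖z - zb‖ ≤ ε →
    f x ≤ f xb + (δ : EReal) ∧ f xb ≤ f x + (δ : EReal)

/-- The subjet `∂^{2,-} f(x)`: pairs `(∇φ(x), ∇²φ(x))` for `C²` functions `φ`
with `f - φ` having a local minimum at `x`. -/
def subjet (f : E n → EReal) (x : E n) : Set (E n × (E n →L[ℝ] E n)) :=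
  {p | ∃ φ : E n → ℝ, ContDiff ℝ 2 φ ∧
      IsLocalMin (fun y => f y - ((φ y : ℝ) : EReal)) x ∧
      p.1 = gradient φ x ∧ p.2 = fderiv ℝ (gradient φ) x}

/-- Pointwise subhessians `∂^{2,-} f(x,z)`. -/
def subhessian (f : E n → EReal) (x z : E n) : Set (E n →L[ℝ] E n) :=
  {Q | (z, Q) ∈ subjet f x}

/-- The limiting subjet `∂̲² f(x)`. -/
def limSubjet (f : E n → EReal) (x : E n) : Set (E n × (E n →L[ℝ] E n)) :=
  {p | ∃ (xk : ℕ → E n) (pk : ℕ → E n × (E n →L[ℝ] E n)),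
      (∀ k, pk k ∈ subjet f (xk k)) ∧
      Tendsto xk atTop (𝓝 x) ∧
      Tendsto (fun k => f (xk k)) atTop (𝓝 (f x)) ∧
      Tendsto pk atTop (𝓝 p)}

/-- The limiting subhessians `∂̲² f(x,z)`. -/
def limSubhessian (f : E n → EReal) (x z : E n) : Set (E n →L[ℝ] E n) :=
  {Q | (z, Q) ∈ limSubjet f x}

/-- The rank-one support `q(𝒜)(h) = sup {⟨Q h, h⟩ : Q ∈ 𝒜}`. -/
def q1 (A : Set (E n →L[ℝ] E n)) (h : E n) : EReal :=
  ⨆ Q ∈ A, ((⟪Q h, h⟫ : ℝ) : EReal)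

/-- The rank-one barrier cone `b¹(𝒜) = dom q(𝒜)`. -/
def b1 (A : Set (E n →L[ℝ] E n)) : Set (E n) :=
  {h | q1 A h < ⊤}

/-- Support function `δ*_C`. -/
def suppFn (C : Set (E n)) (u : E n) : EReal :=
  ⨆ z ∈ C, ((⟪z, u⟫ : ℝ) : EReal)

/-- The set of minimisers of the tilted function `f - ⟨·, z⟩` over the closed
`ε`-ball around `xb`. -/
def tiltArgmin (f : E n → EReal) (xb : E n) (ε : ℝ) (z : E n) : Set (E n) :=
  {x | ‖x - xb‖ ≤ ε ∧ ∀ y : E n, ‖y - xb‖ ≤ ε →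
      f x - ((⟪x, z⟫ : ℝ) : EReal) ≤ f y - ((⟪y, z⟫ : ℝ) : EReal)}

/-- `xb` gives a tilt stable local minimum of `f` with radius `ε`. -/
def TiltStableWith (f : E n → EReal) (xb : E n) (ε : ℝ) : Prop :=
  0 < ε ∧ f xb ≠ ⊤ ∧ f xb ≠ ⊥ ∧
  ∃ (m : E n → E n) (δ : ℝ) (L : NNReal), 0 < δ ∧
    LipschitzOnWith L m (ball (0 : E n) δ) ∧ m 0 = xb ∧
    ∀ z ∈ ball (0 : E n) δ, tiltArgmin f xb ε z = {m z}

/-- `xb` gives a tilt stable local minimum of `f`. -/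
def TiltStable (f : E n → EReal) (xb : E n) : Prop :=
  ∃ ε : ℝ, TiltStableWith f xb ε

/-- Tilted argmin relative to a subspace `W`. -/
def tiltArgminOn (W : Submodule ℝ (E n)) (f : E n → EReal) (xb : E n) (ε : ℝ)
    (z : E n) : Set (E n) :=
  {x | x ∈ W ∧ ‖x - xb‖ ≤ ε ∧ ∀ y ∈ (W : Set (E n)), ‖y - xb‖ ≤ ε →
      f x - ((⟪x, z⟫ : ℝ) : EReal) ≤ f y - ((⟪y, z⟫ : ℝ) : EReal)}

/-- Tilt stable local minimum of a function considered on a subspace `W`. -/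
def TiltStableOnWith (W : Submodule ℝ (E n)) (f : E n → EReal) (xb : E n)
    (ε : ℝ) : Prop :=
  0 < ε ∧ f xb ≠ ⊤ ∧ f xb ≠ ⊥ ∧
  ∃ (m : E n → E n) (δ : ℝ) (L : NNReal), 0 < δ ∧
    LipschitzOnWith L m (ball (0 : E n) δ ∩ (W : Set (E n))) ∧ m 0 = xb ∧
    ∀ z ∈ ball (0 : E n) δ ∩ (W : Set (E n)), tiltArgminOn W f xb ε z = {m z}

def TiltStableOn (W : Submodule ℝ (E n)) (f : E n → EReal) (xb : E n) : Prop :=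
  ∃ ε : ℝ, TiltStableOnWith W f xb ε

/-- Epigraph with real heights. -/
def epiR (h : E n → EReal) : Set (E n × ℝ) :=
  {p | h p.1 ≤ (p.2 : EReal)}

/-- Lower semicontinuous convex hull `co h`: its epigraph is the closed convex
hull of the epigraph of `h`. -/
def coHull (h : E n → EReal) : E n → EReal :=
  fun w => sInf ((fun c : ℝ => (c : EReal)) ''
    {c : ℝ | (w, c) ∈ closure (convexHull ℝ (epiR h))})

/-- Convex (Fenchel) conjugate. -/
def conj (g : E n → EReal) (z : E n) : EReal :=
  ⨆ x : E n, ((⟪z, x⟫ : ℝ) : EReal) - g x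

/-- Convex conjugate with respect to a subspace `W`. -/
def conjOn (W : Submodule ℝ (E n)) (g : E n → EReal) (z : E n) : EReal :=
  ⨆ x : W, ((⟪z, (x : E n)⟫ : ℝ) : EReal) - g (x : E n)

/-- The subdifferential of convex analysis `∂_co g(u)`. -/
def convexSubdiff (g : E n → EReal) (u : E n) : Set (E n) :=
  {z | ∀ u' : E n, g u + ((⟪z, u' - u⟫ : ℝ) : EReal) ≤ g u'}

/-- The convex subdifferential relative to a subspace `W`. -/
def convexSubdiffOn (W : Submodule ℝ (E n)) (g : E n → EReal) (u : E n) :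
    Set (E n) :=
  {z | z ∈ W ∧ ∀ u' ∈ (W : Set (E n)), g u + ((⟪z, u' - u⟫ : ℝ) : EReal) ≤ g u'}

/-- Orthogonal projection onto `W` as a map `E n →L[ℝ] E n`. -/
def projE (W : Submodule ℝ (E n)) : E n →L[ℝ] E n :=
  W.subtypeL.comp (Submodule.orthogonalProjectionOnto W)

/-- Fréchet (regular) normals to a subset of a product. -/
def frechetNormal2 (S : Set (E n × E n)) (p : E n × E n) : Set (E n × E n) :=
  {v | ∀ ε : ℝ, 0 < ε → ∃ δ : ℝ, 0 < δ ∧ ∀ q ∈ S,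
      ‖q.1 - p.1‖ < δ → ‖q.2 - p.2‖ < δ →
      ⟪v.1, q.1 - p.1⟫ + ⟪v.2, q.2 - p.2⟫ ≤ ε * (‖q.1 - p.1‖ + ‖q.2 - p.2‖)}

/-- Limiting (Mordukhovich) normals to a subset of a product. -/
def limNormal2 (S : Set (E n × E n)) (p : E n × E n) : Set (E n × E n) :=
  {v | ∃ pk vk : ℕ → E n × E n,
      (∀ k, pk k ∈ S ∧ vk k ∈ frechetNormal2 S (pk k)) ∧
      Tendsto pk atTop (𝓝 p) ∧ Tendsto vk atTop (𝓝 v)}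

/-- The Mordukhovich coderivative `D* F(x,y)(w)` of a set-valued map. -/
def coderiv (F : E n → Set (E n)) (x y w : E n) : Set (E n) :=
  {p | (p, -w) ∈ limNormal2 {q : E n × E n | q.2 ∈ F q.1} (x, y)}

/-- Limiting Hessians `D̄² f(x,z)` of a real-valued function. -/
def limHessians (f : E n → ℝ) (x z : E n) : Set (E n →L[ℝ] E n) :=
  {Q | ∃ xk : ℕ → E n,
      (∀ k, DifferentiableAt ℝ (gradient f) (xk k)) ∧
      Tendsto xk atTop (𝓝 x) ∧
      Tendsto (fun k => f (xk k)) atTop (𝓝 (f x)) ∧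
      Tendsto (fun k => gradient f (xk k)) atTop (𝓝 z) ∧
      Tendsto (fun k => fderiv ℝ (gradient f) (xk k)) atTop (𝓝 Q)}

/-- `f` is `C^{1,1}` near `x`: differentiable with locally Lipschitz gradient. -/
def C11Near (f : E n → ℝ) (x : E n) : Prop :=
  ∃ δ : ℝ, 0 < δ ∧ (∀ y ∈ ball x δ, DifferentiableAt ℝ f y) ∧
    ∃ L : NNReal, LipschitzOnWith L (gradient f) (ball x δ)

/-- Second-order difference quotient `Δ₂`. -/
def delta2 (g : E n → EReal) (x : E n) (t : ℝ) (z u : E n) : EReal :=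
  ((2 / t ^ 2 : ℝ) : EReal) *
    (g (x + t • u) - g x - ((t * ⟪z, u⟫ : ℝ) : EReal))

/-- Lower second-order Dini directional derivative `g″₋(x, z, h)`. -/
def dini2 (g : E n → EReal) (x z h : E n) : EReal :=
  liminf (fun p : ℝ × E n => delta2 g x p.1 z p.2) ((𝓝[>] (0 : ℝ)) ×ˢ 𝓝 h)

/-- Convexity for extended-real-valued functions. -/
def ERealConvexFn (g : E n → EReal) : Prop :=
  ∀ x y : E n, ∀ a b : ℝ, 0 ≤ a → 0 ≤ b → a + b = 1 →
    g (a • x + b • y) ≤ (a : EReal) * g x + (b : EReal) * g y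

/-- Indicator of the box `B_ε^{U'}(0) ⊕ B_ε^{U'^⊥}(0)`. -/
def boxInd (U' : Submodule ℝ (E n)) (ε : ℝ) (w : E n) : EReal :=
  if ‖projE U' w‖ ≤ ε ∧ ‖projE U'ᗮ w‖ ≤ ε then 0 else ⊤

/-- The localised auxiliary function `h(w) := f(xb+w) + δ_{B_ε^{U'}(0) ⊕ B_ε^{V'}(0)}(w)`. -/
def hFn (f : E n → EReal) (xb : E n) (U' : Submodule ℝ (E n)) (ε : ℝ)
    (w : E n) : EReal :=
  f (xb + w) + boxInd U' ε w

/-- The localised `U'`-Lagrangian `L^ε_{U'}`. -/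
def Lloc (f : E n → EReal) (xb : E n) (U' : Submodule ℝ (E n)) (ε : ℝ)
    (zbV : E n) : E n → EReal := fun u =>
  if u ∈ U' ∧ ‖u‖ ≤ ε then
    sInf ((fun v' : E n => f (xb + u + v') - ((⟪zbV, v'⟫ : ℝ) : EReal)) ''
      {v' : E n | v' ∈ U'ᗮ ∧ ‖v'‖ ≤ ε})
  else ⊤

/-- The auxiliary function `k_v(u) := h(u+v(u)) - ⟨zb_{V'}, u+v(u)⟩`. -/
def kFn (f : E n → EReal) (xb : E n) (U' : Submodule ℝ (E n)) (ε : ℝ)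
    (zbV : E n) (v : E n → E n) : E n → EReal := fun u =>
  hFn f xb U' ε (u + v u) - ((⟪zbV, u + v u⟫ : ℝ) : EReal)

/-- `w` is a minimiser of `v' ↦ f(xb+u+v') - ⟨zbV, v'⟩` over `V' ∩ B_ε(0)`. -/
def IsVSel (f : E n → EReal) (xb : E n) (V' : Submodule ℝ (E n)) (ε : ℝ)
    (zbV : E n) (u w : E n) : Prop :=
  w ∈ V' ∧ ‖w‖ ≤ ε ∧ ∀ w' ∈ (V' : Set (E n)), ‖w'‖ ≤ ε →
    f (xb + u + w) - ((⟪zbV, w⟫ : ℝ) : EReal) ≤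
      f (xb + u + w') - ((⟪zbV, w'⟫ : ℝ) : EReal)

/-- Global argmin set of the tilted function `g - ⟨·, z⟩` (the map `m_h`). -/
def msetArg (g : E n → EReal) (z : E n) : Set (E n) :=
  {w | ∀ w' : E n, g w - ((⟪w, z⟫ : ℝ) : EReal) ≤ g w' - ((⟪w', z⟫ : ℝ) : EReal)}

/-!
Because `zb` lies in the relative interior of `∂f(xb)`, every `zb + c • v` with `v ∈ V` small is
again a limiting subgradient at `xb`. Prox-regularity at `(xb, zb + ((β + r) / 2) • v)`, tested
in the direction `u + v` with `u ⊥ v`, is then exactly the growth estimate. Consequently, for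
every `β ≥ 0` the quadratic with gradient `zb` and Hessian `β P_V - r P_U` minorises `f` near
`xb`, so `β P_V - r P_U ∈ ∂̲²f(xb, zb)` and `q(h) ≥ β ‖P_V h‖² - r ‖P_U h‖²`, which is unbounded
in `β` unless `h ∈ U`. Finally `h ⊥ (∂f(xb) - zb)` means that `⟪·, h⟫` is constant on `∂f(xb)`,
which is what the two equations between support-function values express.
-/

section InnerProductSpace

variable {F : Type*} [NormedAddCommGroup F] [InnerProductSpace ℝ F]

theorem mem_orthogonal_span_sub_iff {C : Set F} {z₀ h : F} :
    h ∈ (Submodule.span ℝ ((· - z₀) '' C))ᗮ ↔ ∀ z ∈ C, ⟪z, h⟫ = ⟪z₀, h⟫ := by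
  rw [← Submodule.span_singleton_le_iff_mem, ← Submodule.IsOrtho, Submodule.isOrtho_span]
  simp [inner_sub_right, sub_eq_zero, real_inner_comm]

theorem inner_starProjection_self (K : Submodule ℝ F) [K.HasOrthogonalProjection] (w : F) :
    ⟪K.starProjection w, w⟫ = ‖K.starProjection w‖ ^ 2 := by
  simpa using K.re_inner_starProjection_eq_normSq w

theorem exists_add_mem_of_mem_intrinsicInterior {C : Set F} {z₀ : F}
    (hz₀ : z₀ ∈ intrinsicInterior ℝ C) :
    ∃ ρ > 0, ∀ w ∈ Submodule.span ℝ ((· - z₀) '' C), ‖w‖ < ρ → z₀ + w ∈ C := by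
  obtain ⟨y, hy, rfl⟩ := hz₀
  obtain ⟨ρ, hρ, hball⟩ := Metric.mem_nhds_iff.1 (mem_interior_iff_mem_nhds.1 hy)
  refine ⟨ρ, hρ, fun w hw hwρ => ?_⟩
  replace hw : w ∈ vectorSpan ℝ C := by
    rwa [vectorSpan_eq_span_vsub_set_right ℝ (intrinsicInterior_subset ⟨y, hy, rfl⟩)]
  have hmem : (y : F) + w ∈ affineSpan ℝ C := by
    simpa [add_comm] using AffineSubspace.vadd_mem_of_mem_direction
      (by rwa [direction_affineSpan]) y.2
  exact hball (a := ⟨_, hmem⟩) (by simpa [Subtype.dist_eq, dist_eq_norm] using hwρ)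

variable [CompleteSpace F]

theorem hasGradientAt_inner_add_quadratic {A : F →L[ℝ] F} (hA : IsSelfAdjoint A) (x z y : F) :
    HasGradientAt (fun w => ⟪z, w - x⟫ + ⟪A (w - x), w - x⟫) (z + (2 : ℝ) • A (y - x)) y := by
  have hsub : HasFDerivAt (fun w : F => w - x) (ContinuousLinearMap.id ℝ F) y :=
    (hasFDerivAt_id y).sub_const x
  rw [hasGradientAt_iff_hasFDerivAt]
  refine (((hasFDerivAt_const z y).inner ℝ hsub).add
    ((A.hasFDerivAt.comp y hsub).inner ℝ hsub)).congr_fderiv ?_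
  ext w
  have hsymm : ⟪A w, y - x⟫ = ⟪w, A (y - x)⟫ := hA.isSymmetric w (y - x)
  simp only [add_apply, ContinuousLinearMap.comp_apply, ContinuousLinearMap.prod_apply,
    zero_apply, ContinuousLinearMap.id_apply, Function.comp_apply, fderivInnerCLM_apply,
    inner_zero_left, InnerProductSpace.toDual_apply_apply, inner_add_left, real_inner_smul_left,
    hsymm]
  rw [real_inner_comm (A (y - x)) w]
  ring

end InnerProductSpace

theorem inner_le_suppFn {C : Set (E n)} {z : E n} (hz : z ∈ C) (h : E n) :
    ((⟪z, h⟫ : ℝ) : EReal) ≤ suppFn C h :=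
  le_iSup₂_of_le z hz le_rfl

theorem suppFn_eq_of_forall_inner_eq {C : Set (E n)} {z₀ h : E n} (hz₀ : z₀ ∈ C)
    (hC : ∀ z ∈ C, ⟪z, h⟫ = ⟪z₀, h⟫) : suppFn C h = ((⟪z₀, h⟫ : ℝ) : EReal) :=
  le_antisymm (iSup₂_le fun z hz => by rw [hC z hz]) (inner_le_suppFn hz₀ h)

theorem orthogonal_span_sub_eq {C : Set (E n)} {z₀ : E n} (hz₀ : z₀ ∈ C) :
    ((Submodule.span ℝ ((· - z₀) '' C))ᗮ : Set (E n)) =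
      {h | -(suppFn C (-h)) = suppFn C h ∧ suppFn C h = ((⟪z₀, h⟫ : ℝ) : EReal)} := by
  ext h
  rw [SetLike.mem_coe, mem_orthogonal_span_sub_iff, Set.mem_ofPred_eq]
  constructor
  · intro hC
    have hC' : ∀ z ∈ C, ⟪z, -h⟫ = ⟪z₀, -h⟫ := by simpa [inner_neg_right] using hC
    rw [suppFn_eq_of_forall_inner_eq hz₀ hC, suppFn_eq_of_forall_inner_eq hz₀ hC',
      inner_neg_right, EReal.coe_neg, neg_neg]
    exact ⟨rfl, rfl⟩
  · rintro ⟨hneg, hpos⟩ z hz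
    have hle : ⟪z, h⟫ ≤ ⟪z₀, h⟫ := by
      exact_mod_cast hpos ▸ inner_le_suppFn hz h
    have hge : -⟪z, h⟫ ≤ -⟪z₀, h⟫ := by
      have := inner_le_suppFn hz (-h)
      rw [← neg_neg (suppFn C (-h)), hneg, hpos, inner_neg_right, ← EReal.coe_neg] at this
      exact_mod_cast this
    linarith

theorem ProxRegularAt.le_add_inner {f : E n → EReal} {xb zb : E n} {ε r : ℝ}
    (hpr : ProxRegularAt f xb zb ε r) {z w : E n} (hz : z ∈ limSubdiff f xb)
    (hzz : ‖z - zb‖ ≤ ε) (hw : ‖w‖ ≤ ε) :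
    f xb + ((⟪z, w⟫ - r / 2 * ‖w‖ ^ 2 : ℝ) : EReal) ≤ f (xb + w) := by
  have hself : f xb ≤ f xb + (ε : EReal) := le_add_of_nonneg_right (mod_cast hpr.1.le)
  simpa using hpr.2.2.2 xb z hz (by simp [hpr.1.le]) hzz hself hself (xb + w) (by simpa)

theorem ProxRegularAt.sharp_growth {f : E n → EReal} {xb zb : E n} {ε r : ℝ}
    (hpr : ProxRegularAt f xb zb ε r) {V : Submodule ℝ (E n)} {ρ : ℝ} (hρ : 0 < ρ)
    (hball : ∀ w ∈ V, ‖w‖ < ρ → zb + w ∈ limSubdiff f xb) {β : ℝ} (hβ : 0 ≤ β) :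
    ∃ εβ : ℝ, 0 < εβ ∧
      ∀ u ∈ (Vᗮ : Set (E n)), ∀ v ∈ (V : Set (E n)), ‖u‖ ≤ ε / 2 → ‖v‖ ≤ εβ →
        f xb + ((⟪zb, u + v⟫ + β / 2 * ‖v‖ ^ 2 - r / 2 * ‖u‖ ^ 2 : ℝ) : EReal) ≤
          f (xb + u + v) := by
  have hε := hpr.1
  have hr := hpr.2.1
  set c := (β + r) / 2 with hc
  have hc0 : 0 ≤ c := by positivity
  set δ := min (ρ / 2) ε
  have hδ : 0 < δ := lt_min (half_pos hρ) hε
  refine ⟨min (ε / 2) (δ / (c + 1)), lt_min (half_pos hε) (by positivity),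
    fun u hu v hv hun hvn => ?_⟩
  have hcv : ‖c • v‖ ≤ δ := by
    have := (le_div_iff₀ (by positivity)).1 (hvn.trans (min_le_right _ _))
    rw [norm_smul, Real.norm_of_nonneg hc0]
    nlinarith [norm_nonneg v]
  have hz : zb + c • v ∈ limSubdiff f xb :=
    hball _ (V.smul_mem c hv) (hcv.trans_lt ((min_le_left _ _).trans_lt (half_lt_self hρ)))
  have huv_le : ‖u + v‖ ≤ ε := by
    linarith [norm_add_le u v, min_le_left (ε / 2) (δ / (c + 1))]
  have key := hpr.le_add_inner hz (by simpa using hcv.trans (min_le_right _ _)) huv_le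
  rw [← add_assoc] at key
  refine le_trans (le_of_eq ?_) key
  have hvu : ⟪v, u⟫ = 0 := (Submodule.mem_orthogonal V u).1 hu v hv
  have huv : ⟪u, v⟫ = 0 := (Submodule.mem_orthogonal' V u).1 hu v hv
  congr 2
  rw [norm_add_sq_real, huv]
  simp only [inner_add_left, inner_add_right, real_inner_smul_left, hvu,
    real_inner_self_eq_norm_sq, hc]
  ring

theorem subjet_subset_limSubjet (f : E n → EReal) (x : E n) : subjet f x ⊆ limSubjet f x :=
  fun p hp => ⟨fun _ => x, fun _ => p, fun _ => hp, tendsto_const_nhds, tendsto_const_nhds,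
    tendsto_const_nhds⟩

theorem mem_subjet_of_eventually_le {f : E n → EReal} {x z : E n} {A : E n →L[ℝ] E n}
    (hA : IsSelfAdjoint A)
    (hle : ∀ᶠ y in 𝓝 x, f x + ((⟪z, y - x⟫ + ⟪A (y - x), y - x⟫ : ℝ) : EReal) ≤ f y) :
    (z, (2 : ℝ) • A) ∈ subjet f x := by
  set φ : E n → ℝ := fun y => ⟪z, y - x⟫ + ⟪A (y - x), y - x⟫
  have hgrad : gradient φ = fun y => z + ((2 : ℝ) • A) (y - x) :=
    funext fun y => (hasGradientAt_inner_add_quadratic hA x z y).gradient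
  have hsub : ContDiff ℝ 2 fun y : E n => y - x := contDiff_id.sub contDiff_const
  refine ⟨φ, (contDiff_const.inner ℝ hsub).add ((A.contDiff.comp hsub).inner ℝ hsub), ?_,
    by simp [hgrad], ?_⟩
  · filter_upwards [hle] with y hy
    calc f x - ((φ x : ℝ) : EReal) = f x + ((φ y : ℝ) : EReal) - ((φ y : ℝ) : EReal) := by
          rw [EReal.add_sub_cancel_right]; simp [φ]
      _ ≤ f y - ((φ y : ℝ) : EReal) := EReal.sub_le_sub hy le_rfl
  · rw [hgrad]
    exact (((2 : ℝ) • A).hasFDerivAt.comp x ((hasFDerivAt_id x).sub_const x)).const_add z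
      |>.fderiv.symm

theorem eventually_le_of_sharp_growth {f : E n → EReal} {xb zb : E n} {r β ε' εβ : ℝ}
    {V : Submodule ℝ (E n)} (hε' : 0 < ε') (hεβ : 0 < εβ)
    (H : ∀ u ∈ (Vᗮ : Set (E n)), ∀ v ∈ (V : Set (E n)), ‖u‖ ≤ ε' → ‖v‖ ≤ εβ →
      f xb + ((⟪zb, u + v⟫ + β / 2 * ‖v‖ ^ 2 - r / 2 * ‖u‖ ^ 2 : ℝ) : EReal) ≤ f (xb + u + v)) :
    ∀ᶠ y in 𝓝 xb, f xb + ((⟪zb, y - xb⟫ + β / 2 * ‖V.starProjection (y - xb)‖ ^ 2 -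
      r / 2 * ‖Vᗮ.starProjection (y - xb)‖ ^ 2 : ℝ) : EReal) ≤ f y := by
  filter_upwards [ball_mem_nhds xb (lt_min hε' hεβ)] with y hy
  rw [mem_ball, dist_eq_norm] at hy
  have hsplit : Vᗮ.starProjection (y - xb) + V.starProjection (y - xb) = y - xb := by
    rw [add_comm, V.starProjection_add_starProjection_orthogonal]
  have := H _ (Vᗮ.starProjection_apply_mem _) _ (V.starProjection_apply_mem _)
    ((Vᗮ.norm_starProjection_apply_le _).trans (hy.le.trans (min_le_left _ _)))
    ((V.norm_starProjection_apply_le _).trans (hy.le.trans (min_le_right _ _)))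
  rwa [add_assoc, hsplit, add_sub_cancel] at this

theorem eq_top_of_forall_mul_sub_le {x : EReal} {a b : ℝ} (ha : 0 < a)
    (h : ∀ β : ℝ, 0 ≤ β → ((β * a - b : ℝ) : EReal) ≤ x) : x = ⊤ := by
  refine (EReal.eq_top_iff_forall_lt x).2 fun M => ?_
  have hM : M + b + 1 ≤ max 0 ((M + b + 1) / a) * a := (div_le_iff₀ ha).1 (le_max_right _ _)
  exact (EReal.coe_lt_coe_iff.2 (by linarith)).trans_le (h _ (le_max_left _ _))

theorem b1_limSubhessian_subset_orthogonal {f : E n → EReal} {xb zb : E n} {r : ℝ}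
    {V : Submodule ℝ (E n)}
    (hgrowth : ∀ β : ℝ, 0 ≤ β → ∀ᶠ y in 𝓝 xb, f xb + ((⟪zb, y - xb⟫ +
      β / 2 * ‖V.starProjection (y - xb)‖ ^ 2 - r / 2 * ‖Vᗮ.starProjection (y - xb)‖ ^ 2 : ℝ) :
        EReal) ≤ f y) :
    b1 (limSubhessian f xb zb) ⊆ (Vᗮ : Set (E n)) := by
  intro h hh
  rw [SetLike.mem_coe, ← Submodule.starProjection_apply_eq_zero_iff]
  by_contra hne
  refine hh.ne (eq_top_of_forall_mul_sub_le (b := r * ‖Vᗮ.starProjection h‖ ^ 2)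
    (pow_pos (norm_pos_iff.2 hne) 2) fun β hβ => ?_)
  set A : E n →L[ℝ] E n := (β / 2) • V.starProjection - (r / 2) • Vᗮ.starProjection
  have hA : IsSelfAdjoint A :=
    ((IsSelfAdjoint.all _).smul (isSelfAdjoint_starProjection V)).sub
      ((IsSelfAdjoint.all _).smul (isSelfAdjoint_starProjection Vᗮ))
  have hquad : ∀ w, ⟪A w, w⟫ =
      β / 2 * ‖V.starProjection w‖ ^ 2 - r / 2 * ‖Vᗮ.starProjection w‖ ^ 2 := by
    simp only [A, sub_apply, smul_apply, inner_sub_left, real_inner_smul_left,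
      inner_starProjection_self, implies_true]
  have hmem : (2 : ℝ) • A ∈ limSubhessian f xb zb :=
    subjet_subset_limSubjet f xb <| mem_subjet_of_eventually_le hA <|
      (hgrowth β hβ).mono fun y hy => by rwa [hquad, ← add_sub_assoc]
  refine le_trans (le_of_eq ?_) (le_iSup₂_of_le _ hmem le_rfl)
  rw [smul_apply, real_inner_smul_left, hquad]
  ring_nf

theorem statement6_general
    (f : E n → EReal) (xb zb : E n)
    (ε r : ℝ) (hpr : ProxRegularAt f xb zb ε r)
    (hrel : zb ∈ intrinsicInterior ℝ (limSubdiff f xb))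
    (V U : Submodule ℝ (E n))
    (hV : V = Submodule.span ℝ ((fun z => z - zb) '' limSubdiff f xb))
    (hU : U = Vᗮ) :
    (∃ ε' : ℝ, 0 < ε' ∧ ∀ β : ℝ, 0 ≤ β → ∃ εβ : ℝ, 0 < εβ ∧
      ∀ u ∈ (U : Set (E n)), ∀ v ∈ (V : Set (E n)), ‖u‖ ≤ ε' → ‖v‖ ≤ εβ →
        f xb + ((⟪zb, u + v⟫ + β / 2 * ‖v‖ ^ 2 - r / 2 * ‖u‖ ^ 2 : ℝ) : EReal) ≤
          f (xb + u + v)) ∧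
    b1 (limSubhessian f xb zb) ⊆ (U : Set (E n)) ∧
    (U : Set (E n)) =
      {h : E n | -(suppFn (limSubdiff f xb) (-h)) = suppFn (limSubdiff f xb) h ∧
        suppFn (limSubdiff f xb) h = ((⟪zb, h⟫ : ℝ) : EReal)} := by
  subst hU
  obtain ⟨ρ, hρ, hball⟩ := exists_add_mem_of_mem_intrinsicInterior hrel
  rw [← hV] at hball
  have hε' : 0 < ε / 2 := half_pos hpr.1
  have hgrowth := fun β (hβ : 0 ≤ β) => hpr.sharp_growth hρ hball hβ
  refine ⟨⟨ε / 2, hε', hgrowth⟩, ?_, ?_⟩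
  · refine b1_limSubhessian_subset_orthogonal (r := r) fun β hβ => ?_
    obtain ⟨εβ, hεβ, H⟩ := hgrowth β hβ
    exact eventually_le_of_sharp_growth hε' hεβ H
  · rw [hV]
    exact orthogonal_span_sub_eq (intrinsicInterior_subset hrel)

/-- Lemma `lem:sharp`: the quadratic growth estimate in the
`V`-directions and the inclusion `U² ⊆ U`. -/
theorem statement6
    (f : E n → EReal) (xb zb : E n)
    (hproper : ProperFn f) (hlsc : LowerSemicontinuous f)
    (hquad : QuadMinorized f xb)
    (ε r : ℝ) (hpr : ProxRegularAt f xb zb ε r)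
    (hrel : zb ∈ intrinsicInterior ℝ (limSubdiff f xb))
    (V U : Submodule ℝ (E n))
    (hV : V = Submodule.span ℝ ((fun z => z - zb) '' limSubdiff f xb))
    (hU : U = Vᗮ) :
    (∃ ε' : ℝ, 0 < ε' ∧ ∀ β : ℝ, 0 ≤ β → ∃ εβ : ℝ, 0 < εβ ∧
      ∀ u ∈ (U : Set (E n)), ∀ v ∈ (V : Set (E n)), ‖u‖ ≤ ε' → ‖v‖ ≤ εβ →
        f xb + ((⟪zb, u + v⟫ + β / 2 * ‖v‖ ^ 2 - r / 2 * ‖u‖ ^ 2 : ℝ) : EReal) ≤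
          f (xb + u + v)) ∧
    b1 (limSubhessian f xb zb) ⊆ (U : Set (E n)) ∧
    (U : Set (E n)) =
      {h : E n | -(suppFn (limSubdiff f xb) (-h)) = suppFn (limSubdiff f xb) h ∧
        suppFn (limSubdiff f xb) h = ((⟪zb, h⟫ : ℝ) : EReal)} :=
  statement6_general f xb zb ε r hpr hrel V U hV hU

end Paper
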